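/- If (S,R) is a Catalan pair on X, then S∘R̄ ⊆ R̄, where R̄ = R ∪ R⁻¹ is the symmetrization of R; that is, if xSy and y is R-comparable with z, then x is R-comparable with z. -/

import Mathlib

/-- A Catalan pair on a type `X`: `S` and `R` are strict orders, their
symmetrizations are disjoint and cover all pairs of distinct elements,
and `S ∘ R ⊆ R`. -/
def IsCatalanPair {X : Type*} (S R : X → X → Prop) : Prop :=
  (∀ x, ¬ S x x) ∧ (∀ x y z, S x y → S y z → S x z) ∧
  (∀ x, ¬ R x x) ∧ (∀ x y z, R x y → R y z → R x z) ∧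
  (∀ x y, x ≠ y → (R x y ∨ R y x) ∨ (S x y ∨ S y x)) ∧
  (∀ x y, (R x y ∨ R y x) → ¬ (S x y ∨ S y x)) ∧
  (∀ x y z, S x y → R y z → R x z)

namespace IsCatalanPair

variable {X : Type*} {S R : X → X → Prop} {x y z : X}

theorem S_trans (h : IsCatalanPair S R) (hxy : S x y) (hyz : S y z) : S x z :=
  h.2.1 x y z hxy hyz

theorem R_or_R_or_S_or_S_of_ne (h : IsCatalanPair S R) (hxy : x ≠ y) :
    (R x y ∨ R y x) ∨ (S x y ∨ S y x) :=
  h.2.2.2.2.1 x y hxy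

theorem not_R_of_S (h : IsCatalanPair S R) (hxy : S x y) : ¬ R x y :=
  fun hR => h.2.2.2.2.2.1 x y (.inl hR) (.inl hxy)

theorem R_of_S_of_R (h : IsCatalanPair S R) (hxy : S x y) (hyz : R y z) : R x z :=
  h.2.2.2.2.2.2 x y z hxy hyz

end IsCatalanPair

theorem catalan_pair_S_comp_Rbar {X : Type*} (S R : X → X → Prop)
    (h : IsCatalanPair S R) :
    ∀ x y z : X, S x y → (R y z ∨ R z y) → (R x z ∨ R z x) := by
  intro x y z hxy hyz
  rcases hyz with hyz | hzy
  · exact .inl (h.R_of_S_of_R hxy hyz)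
  have hxz : x ≠ z := by
    rintro rfl
    exact h.not_R_of_S hxy hzy
  -- An `S`-relation between `x` and `z` would make some `S`-related pair also `R`-related.
  rcases h.R_or_R_or_S_or_S_of_ne hxz with hR | hSxz | hSzx
  · exact hR
  · exact absurd (h.R_of_S_of_R hSxz hzy) (h.not_R_of_S hxy)
  · exact absurd hzy (h.not_R_of_S (h.S_trans hSzx hxy))
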